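/- If A_P, A_U, A_V are symmetric positive definite and Q_y := A_P D_y^V + (A_V D_y^P)ᵀ = 0 and Q_x := A_P D_x^U + (A_U D_x^P)ᵀ = 0 (e.g. under periodic coupling in both directions), then along any solution of A_P P' = -A_P D_x^U U - A_P D_y^V V, A_U U' = -A_U D_x^P P, A_V V' = -A_V D_y^P P, the energy E = (1/2)(Pᵀ A_P P + Uᵀ A_U U + Vᵀ A_V V) is constant. -/

import Mathlib

/-!
Differentiating `E` and using the symmetry of `A_P, A_U, A_V`, the rate of change of the energy is
`Pᵀ A_P P' + Uᵀ A_U U' + Vᵀ A_V V'`. Substituting the equations of motion turns it into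
`-(Pᵀ (A_P D_x^U) U + Uᵀ (A_U D_x^P) P) - (Pᵀ (A_P D_y^V) V + Vᵀ (A_V D_y^P) P)`, and each bracket
is `Pᵀ Q_x U` resp. `Pᵀ Q_y V`, which vanishes.
-/

open Matrix

variable {m n : Type*} [Fintype m] [Fintype n]

theorem HasDerivAt.dotProduct {f g : ℝ → n → ℝ} {f' g' : n → ℝ} {t : ℝ}
    (hf : HasDerivAt f f' t) (hg : HasDerivAt g g' t) :
    HasDerivAt (fun s => f s ⬝ᵥ g s) (f' ⬝ᵥ g t + f t ⬝ᵥ g') t := by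
  simp only [_root_.dotProduct, ← Finset.sum_add_distrib]
  exact HasDerivAt.fun_sum fun i _ => (hasDerivAt_pi.mp hf i).mul (hasDerivAt_pi.mp hg i)

theorem HasDerivAt.matrix_mulVec (M : Matrix m n ℝ) {g : ℝ → n → ℝ} {g' : n → ℝ} {t : ℝ}
    (hg : HasDerivAt g g' t) : HasDerivAt (fun s => M *ᵥ g s) (M *ᵥ g') t :=
  M.mulVecLin.toContinuousLinearMap.hasFDerivAt.comp_hasDerivAt t hg

theorem Matrix.IsSymm.hasDerivAt_dotProduct_mulVec_self {M : Matrix n n ℝ} (hM : M.IsSymm)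
    {x : ℝ → n → ℝ} {x' : n → ℝ} {t : ℝ} (hx : HasDerivAt x x' t) :
    HasDerivAt (fun s => x s ⬝ᵥ M *ᵥ x s) (2 * (x t ⬝ᵥ M *ᵥ x')) t := by
  convert hx.dotProduct (hx.matrix_mulVec M) using 1
  rw [dotProduct_mulVec x', ← mulVec_transpose, hM.eq, dotProduct_comm]
  ring

theorem Matrix.dotProduct_mulVec_add_dotProduct_mulVec_eq_zero {R : Type*} [CommSemiring R]
    {B : Matrix m n R} {C : Matrix n m R} (h : B + Cᵀ = 0) (p : m → R) (u : n → R) :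
    p ⬝ᵥ B *ᵥ u + u ⬝ᵥ C *ᵥ p = 0 := by
  have hswap : u ⬝ᵥ C *ᵥ p = p ⬝ᵥ Cᵀ *ᵥ u := by
    rw [dotProduct_mulVec, ← mulVec_transpose, dotProduct_comm]
  rw [hswap, ← dotProduct_add, ← add_mulVec, h, zero_mulVec, dotProduct_zero]

/-- Energy conservation for the 2D semi-discretization when both SBP matrices vanish
    (e.g. periodic coupling in both directions). -/
theorem stmt9 {NP NU NV : ℕ}
    (AP : Matrix (Fin NP) (Fin NP) ℝ) (AU : Matrix (Fin NU) (Fin NU) ℝ)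
    (AV : Matrix (Fin NV) (Fin NV) ℝ)
    (hAP : AP.PosDef) (hAU : AU.PosDef) (hAV : AV.PosDef)
    (DxU : Matrix (Fin NP) (Fin NU) ℝ) (DyV : Matrix (Fin NP) (Fin NV) ℝ)
    (DxP : Matrix (Fin NU) (Fin NP) ℝ) (DyP : Matrix (Fin NV) (Fin NP) ℝ)
    (hQy : AP * DyV + (AV * DyP)ᵀ = 0)
    (hQx : AP * DxU + (AU * DxP)ᵀ = 0)
    (P : ℝ → Fin NP → ℝ) (U : ℝ → Fin NU → ℝ) (V : ℝ → Fin NV → ℝ)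
    (P' : ℝ → Fin NP → ℝ) (U' : ℝ → Fin NU → ℝ) (V' : ℝ → Fin NV → ℝ)
    (hP : ∀ t, HasDerivAt P (P' t) t) (hU : ∀ t, HasDerivAt U (U' t) t)
    (hV : ∀ t, HasDerivAt V (V' t) t)
    (hPode : ∀ t, AP.mulVec (P' t) = -((AP * DxU).mulVec (U t)) - (AP * DyV).mulVec (V t))
    (hUode : ∀ t, AU.mulVec (U' t) = -((AU * DxP).mulVec (P t)))
    (hVode : ∀ t, AV.mulVec (V' t) = -((AV * DyP).mulVec (P t)))
    (E : ℝ → ℝ)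
    (hE : ∀ t, E t = (1/2) * (P t ⬝ᵥ AP.mulVec (P t) + U t ⬝ᵥ AU.mulVec (U t)
      + V t ⬝ᵥ AV.mulVec (V t))) :
    ∀ t s, E t = E s := by
  have hE' : ∀ t, HasDerivAt E 0 t := by
    intro t
    have hrate : P t ⬝ᵥ AP *ᵥ P' t + U t ⬝ᵥ AU *ᵥ U' t + V t ⬝ᵥ AV *ᵥ V' t = 0 := by
      have hx := dotProduct_mulVec_add_dotProduct_mulVec_eq_zero hQx (P t) (U t)
      have hy := dotProduct_mulVec_add_dotProduct_mulVec_eq_zero hQy (P t) (V t)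
      rw [hPode, hUode, hVode, dotProduct_sub, dotProduct_neg, dotProduct_neg, dotProduct_neg]
      linarith
    have hPE := (isHermitian_iff_isSymm.mp hAP.isHermitian).hasDerivAt_dotProduct_mulVec_self (hP t)
    have hUE := (isHermitian_iff_isSymm.mp hAU.isHermitian).hasDerivAt_dotProduct_mulVec_self (hU t)
    have hVE := (isHermitian_iff_isSymm.mp hAV.isHermitian).hasDerivAt_dotProduct_mulVec_self (hV t)
    rw [funext hE]
    refine (((hPE.add hUE).add hVE).const_mul (1 / 2 : ℝ)).congr_deriv ?_
    linear_combination hrate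
  exact is_const_of_deriv_eq_zero (fun t => (hE' t).differentiableAt) (fun t => (hE' t).deriv)
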